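/- arXiv:2212.03457 — 2 statements merged into one kernel-verified Lean document; each statement's English description precedes it below -/
import Mathlib

section
/- There exists an initial placement of k agents on an n-node dynamic ring and an adversarial edge-removal schedule (removing at most one edge per round) such that some agent is at distance at least n - k from every other agent and the missing edge separates it from all others, so at least n - k rounds are needed before that agent can share a node with any other agent; hence the time complexity of g-partial gathering is Ω(n) when k = o(n). -/
/-- with agent a_0 at node 0 and agents a_1,...,a_{k-1} at nodes
n-k+1,...,n-1 of an n-node ring whose edge {v_{n-1}, v_0} is missing in every
round (so agents walk on the path 0,...,n-1 moving by at most one per round),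
agent a_0 needs at least ⌈(n-k)/2⌉ rounds to occupy the same node as any other
agent; hence g-partial gathering needs Ω(n) time. -/
theorem stmt_9 (n k : ℕ) (hk2 : 2 ≤ k) (hkn : k ≤ n / 2)
    (traj : Fin k → ℕ → ℕ)
    (hlt : ∀ i t, traj i t < n)
    (hstep : ∀ i t, traj i (t + 1) = traj i t ∨
      traj i (t + 1) = traj i t + 1 ∨ traj i (t + 1) + 1 = traj i t)
    (h0 : traj ⟨0, by omega⟩ 0 = 0)
    (hinit : ∀ j : Fin k, j ≠ ⟨0, by omega⟩ → traj j 0 = n - k + j.val) :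
    ∀ t : ℕ, ∀ j : Fin k, j ≠ ⟨0, by omega⟩ →
      traj j t = traj ⟨0, by omega⟩ t → (n - k + 1) / 2 ≤ t := by
  have key : ∀ i : Fin k, ∀ t, traj i t ≤ traj i 0 + t ∧ traj i 0 ≤ traj i t + t := by
    intro i t
    induction t with
    | zero => omega
    | succ t ih => rcases hstep i t with h | h | h <;> omega
  intro t j hj hmeet
  have hj0 := hinit j hj
  have hjv : 1 ≤ j.val := by
    rcases Nat.eq_zero_or_pos j.val with h | h
    · exact absurd (Fin.ext h) hj
    · exact h
  have k1 := key j t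
  have k2 := key ⟨0, by omega⟩ t
  omega
end

section
/- Suppose all k agents attempt to move clockwise for 3n rounds on a dynamic n-cycle with at most one missing edge per round. Then every agent that advances fewer than n times ends at the same node as every other such agent; consequently, after the 3n rounds, either an agent has traversed the whole ring, or all agents that failed to traverse occupy one common node. -/
/-- all k agents try to move clockwise for 3n rounds; in each
round the blocked agents (if any) are all at the same node (behind the unique
missing edge), and co-located agents are blocked simultaneously. Then any two
agents each blocked in at least 2n+1 rounds end at the same node. -/
theorem stmt_11 (n k : ℕ) (hn : 1 ≤ n)
    (pos : Fin k → ℕ → ZMod n) (adv : Fin k → ℕ → Bool)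
    (hstep : ∀ i t, pos i (t + 1) = if adv i t then pos i t + 1 else pos i t)
    (hblksame : ∀ t < 3 * n, ∀ i j : Fin k,
      adv i t = false → adv j t = false → pos i t = pos j t)
    (hsame : ∀ t < 3 * n, ∀ i j : Fin k,
      pos i t = pos j t → adv i t = adv j t) :
    ∀ i j : Fin k,
      2 * n + 1 ≤ ((Finset.range (3 * n)).filter (fun t => adv i t = false)).card →
      2 * n + 1 ≤ ((Finset.range (3 * n)).filter (fun t => adv j t = false)).card →
      pos i (3 * n) = pos j (3 * n) := by
  intro i j hi hj
  set A := (Finset.range (3 * n)).filter (fun t => adv i t = false) with hA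
  set B := (Finset.range (3 * n)).filter (fun t => adv j t = false) with hB
  have hunion : (A ∪ B).card ≤ 3 * n := by
    have : A ∪ B ⊆ Finset.range (3 * n) := by
      apply Finset.union_subset <;> exact Finset.filter_subset _ _
    simpa using Finset.card_le_card this
  have hcard : 0 < (A ∩ B).card := by
    have h := Finset.card_inter_add_card_union A B
    omega
  obtain ⟨t, ht⟩ := Finset.card_pos.mp hcard
  rw [Finset.mem_inter] at ht
  obtain ⟨hti, htj⟩ := ht
  rw [hA, Finset.mem_filter, Finset.mem_range] at hti
  rw [hB, Finset.mem_filter, Finset.mem_range] at htj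
  have hbase : pos i t = pos j t := hblksame t hti.1 i j hti.2 htj.2
  have key : ∀ d, t + d ≤ 3 * n → pos i (t + d) = pos j (t + d) := by
    intro d
    induction d with
    | zero => intro _; simpa using hbase
    | succ d ih =>
      intro hd
      have hlt : t + d < 3 * n := by omega
      have hpos := ih (by omega)
      have hadv : adv i (t + d) = adv j (t + d) := hsame _ hlt i j hpos
      rw [show t + (d + 1) = (t + d) + 1 by ring, hstep, hstep, hadv, hpos]
  have := key (3 * n - t) (by omega)
  rwa [show t + (3 * n - t) = 3 * n by omega] at this
end
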